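/- arXiv:1210.4654 — 3 statements merged into one kernel-verified Lean document; each statement's English description precedes it below -/
import Mathlib

section
/- Under consistency, sequential ignorability and positivity, for each e ∈ {0,1} the counterfactual mean E[Y_{e,M_e}] is identified by the g-formula: E[Y_{e,M_e}] = δ_e := Σ_{x, P(X=x)>0} E(Y | E=e, X=x)·P(X=x) = Σ_{m∈𝒮, x∈𝒳, P(X=x)>0} E(Y | E=e, M=m, X=x)·P(M=m | E=e, X=x)·P(X=x). -/
open MeasureTheory ProbabilityTheory

/-!
Split `E[Y_{e,M_e}]` over the fibres `{X = x}`. On a fibre, sequential ignorability (i) makes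
`Y_{e,M_e}` independent of `E`, so conditioning further on `{E = e}` leaves its mean unchanged, and
by consistency `Y_{e,M_e} = Y` on `{E = e}`. This is the first formula; the second is the law of
total expectation for `Y` over the values of `M` inside `{E = e, X = x}`.
-/

/-- Conditional probability of `B` given the event `A`: `P(B ∩ A) / P(A)`. -/
noncomputable def cP {Ω : Type*} [MeasurableSpace Ω] (μ : Measure Ω) (B A : Set Ω) : ℝ :=
  (μ (B ∩ A)).toReal / (μ A).toReal

/-- Conditional expectation of `Y` given the event `A`: `E[Y·1_A] / P(A)`. -/
noncomputable def cE {Ω : Type*} [MeasurableSpace Ω] (μ : Measure Ω) (Y : Ω → ℝ) (A : Set Ω) : ℝ :=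
  (∫ ω in A, Y ω ∂μ) / (μ A).toReal

section ConditionalMean

variable {Ω : Type*} [MeasurableSpace Ω] {μ : Measure Ω}

-- When `μ A` is `0` or `∞`, both sides are the junk value `0`.
lemma cE_eq_integral_cond (Y : Ω → ℝ) (A : Set Ω) : cE μ Y A = ∫ ω, Y ω ∂μ[|A] := by
  rw [cE, ProbabilityTheory.cond, integral_smul_measure, ENNReal.toReal_inv, smul_eq_mul,
    div_eq_inv_mul]

lemma cE_congr_ae {A : Set Ω} (hA : MeasurableSet A) {f g : Ω → ℝ}
    (h : ∀ᵐ ω ∂μ, ω ∈ A → f ω = g ω) : cE μ f A = cE μ g A := by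
  rw [cE, cE, setIntegral_congr_ae hA h]

lemma cE_cond [IsFiniteMeasure μ] {A B : Set Ω} (hA : MeasurableSet A) (hB : MeasurableSet B)
    (Y : Ω → ℝ) : cE μ[|A] Y B = cE μ Y (A ∩ B) := by
  rw [cE_eq_integral_cond, cE_eq_integral_cond, cond_cond_eq_cond_inter hA hB]

lemma toReal_cond_eq_cP {A : Set Ω} (hA : MeasurableSet A) (B : Set Ω) :
    (μ[|A] B).toReal = cP μ B A := by
  rw [cP, cond_apply hA, ENNReal.toReal_mul, ENNReal.toReal_inv, Set.inter_comm, div_eq_inv_mul]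

lemma MeasureTheory.Integrable.cond {Y : Ω → ℝ} (hY : Integrable Y μ) (A : Set Ω) :
    Integrable Y μ[|A] := by
  by_cases hA : μ A = 0
  · simp [cond_eq_zero_of_meas_eq_zero hA]
  · exact hY.restrict.smul_measure (ENNReal.inv_ne_top.2 hA)

lemma integral_eq_sum_cE_mul_measure [IsFiniteMeasure μ] {α : Type*} [Fintype α]
    [MeasurableSpace α] [MeasurableSingletonClass α] {X : Ω → α} (hX : Measurable X)
    {Y : Ω → ℝ} (hY : Integrable Y μ) :
    ∫ ω, Y ω ∂μ = ∑ x, cE μ Y (X ⁻¹' {x}) * (μ (X ⁻¹' {x})).toReal := by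
  conv_lhs => rw [← sum_meas_smul_cond_fiber hX μ]
  rw [integral_finsetSum_measure fun x _ => (hY.cond _).smul_measure (measure_ne_top μ _)]
  simp_rw [integral_smul_measure, cE_eq_integral_cond, smul_eq_mul, mul_comm]

lemma cE_eq_sum_cE_mul_cP [IsFiniteMeasure μ] {α : Type*} [Fintype α]
    [MeasurableSpace α] [MeasurableSingletonClass α] {M : Ω → α} (hM : Measurable M)
    {A : Set Ω} (hA : MeasurableSet A) {Y : Ω → ℝ} (hY : Integrable Y μ) :
    cE μ Y A = ∑ m, cE μ Y (A ∩ M ⁻¹' {m}) * cP μ (M ⁻¹' {m}) A := by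
  rw [cE_eq_integral_cond, integral_eq_sum_cE_mul_measure hM (hY.cond A)]
  simp_rw [cE_cond hA (hM (measurableSet_singleton _)), toReal_cond_eq_cP hA]

lemma ProbabilityTheory.IndepFun.cE_preimage_eq_integral [IsProbabilityMeasure μ] {β : Type*}
    [MeasurableSpace β] {g : Ω → ℝ} {E : Ω → β} (hgE : IndepFun g E μ)
    (hg : AEStronglyMeasurable g μ) (hE : Measurable E) {s : Set β} (hs : MeasurableSet s)
    (hμ : μ (E ⁻¹' s) ≠ 0) : cE μ g (E ⁻¹' s) = ∫ ω, g ω ∂μ := by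
  have hind : Measurable (s.indicator (1 : β → ℝ)) := measurable_one.indicator hs
  have hcomp : (E ⁻¹' s).indicator (1 : Ω → ℝ) = s.indicator 1 ∘ E := by
    ext ω; by_cases hω : E ω ∈ s <;> simp [hω]
  have hindep : IndepFun ((E ⁻¹' s).indicator (1 : Ω → ℝ)) g μ := by
    simpa [hcomp] using (hgE.comp measurable_id hind).symm
  have hsplit : ∫ ω in E ⁻¹' s, g ω ∂μ = μ.real (E ⁻¹' s) * ∫ ω, g ω ∂μ := by
    rw [← integral_indicator (hE hs), ← integral_indicator_one (hE hs),
      ← hindep.integral_mul_eq_mul_integral (aestronglyMeasurable_one.indicator (hE hs)) hg]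
    congr with ω
    by_cases hω : ω ∈ E ⁻¹' s <;> simp [hω]
  rw [cE, hsplit, measureReal_def,
    mul_div_cancel_left₀ _ (ENNReal.toReal_ne_zero.2 ⟨hμ, measure_ne_top μ _⟩)]

lemma cE_eq_cE_inter_of_indepFun [IsFiniteMeasure μ] {β : Type*} [MeasurableSpace β]
    {g : Ω → ℝ} {E : Ω → β} {A : Set Ω} (hA : MeasurableSet A) (hgE : IndepFun g E μ[|A])
    (hg : AEStronglyMeasurable g μ) (hE : Measurable E) {s : Set β} (hs : MeasurableSet s)
    (hpos : μ (E ⁻¹' s ∩ A) ≠ 0) : cE μ g A = cE μ g (E ⁻¹' s ∩ A) := by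
  have : IsProbabilityMeasure μ[|A] :=
    cond_isProbabilityMeasure fun h => hpos (measure_mono_null Set.inter_subset_right h)
  rw [cE_eq_integral_cond,
    ← hgE.cE_preimage_eq_integral (hg.mono_ac cond_absolutelyContinuous) hE hs,
    cE_cond hA (hE hs), Set.inter_comm]
  exact (cond_pos_of_inter_ne_zero hA (by rwa [Set.inter_comm])).ne'

lemma integrable_comp_measurable_index {ι : Type*} [Fintype ι] [MeasurableSpace ι]
    [MeasurableSingletonClass ι] {Y : ι → Ω → ℝ} {N : Ω → ι} (hY : ∀ i, Integrable (Y i) μ)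
    (hN : Measurable N) : Integrable (fun ω => Y (N ω) ω) μ := by
  classical
  have hsum : (fun ω => Y (N ω) ω) = fun ω => ∑ i, (N ⁻¹' {i}).indicator (Y i) ω := by
    ext ω
    simp [Set.indicator_apply, eq_comm]
  rw [hsum]
  exact integrable_finsetSum _ fun i _ => (hY i).indicator (hN (measurableSet_singleton i))

end ConditionalMean

open Classical in
theorem g_formula_identification_general
    {Ω 𝒳 𝒮 : Type*} [MeasurableSpace Ω] [Fintype 𝒳] [Fintype 𝒮]
    [MeasurableSpace 𝒳] [MeasurableSingletonClass 𝒳]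
    [MeasurableSpace 𝒮] [MeasurableSingletonClass 𝒮]
    (μ : Measure Ω) [IsProbabilityMeasure μ]
    (X : Ω → 𝒳) (M : Ω → 𝒮) (E : Ω → Bool) (Y : Ω → ℝ)
    (hX : Measurable X) (hM : Measurable M) (hE : Measurable E)
    (hY : Integrable Y μ)
    -- counterfactuals: `Yc e m = Y_{e,m}` and `Mc e = M_e`
    (Yc : Bool → 𝒮 → Ω → ℝ) (Mc : Bool → Ω → 𝒮)
    (hYc : ∀ e m, Integrable (Yc e m) μ) (hMc : ∀ e, Measurable (Mc e))
    -- positivity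
    (hposE : ∀ (e : Bool) (x : 𝒳), μ (X ⁻¹' {x}) ≠ 0 → μ (E ⁻¹' {e} ∩ X ⁻¹' {x}) ≠ 0)
    -- consistency
    (hconsM : ∀ e : Bool, ∀ᵐ ω ∂μ, E ω = e → Mc e ω = M ω)
    (hconsY : ∀ (e : Bool) (m : 𝒮), ∀ᵐ ω ∂μ, E ω = e → M ω = m → Yc e m ω = Y ω)
    -- sequential ignorability (i): ((Y_{e',m'})_{m'}, M_e) ⫫ E | X
    (hSI1 : ∀ (e e' : Bool) (x : 𝒳), μ (X ⁻¹' {x}) ≠ 0 →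
      IndepFun (fun ω => ((fun m => Yc e' m ω), Mc e ω)) E (μ[|X ⁻¹' {x}])) :
    ∀ e : Bool,
      (∫ ω, Yc e (Mc e ω) ω ∂μ =
        ∑ x ∈ Finset.univ.filter (fun x => μ (X ⁻¹' {x}) ≠ 0),
          cE μ Y (E ⁻¹' {e} ∩ X ⁻¹' {x}) * (μ (X ⁻¹' {x})).toReal) ∧
      (∑ x ∈ Finset.univ.filter (fun x => μ (X ⁻¹' {x}) ≠ 0),
          cE μ Y (E ⁻¹' {e} ∩ X ⁻¹' {x}) * (μ (X ⁻¹' {x})).toReal =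
        ∑ m : 𝒮, ∑ x ∈ Finset.univ.filter (fun x => μ (X ⁻¹' {x}) ≠ 0),
          cE μ Y (E ⁻¹' {e} ∩ M ⁻¹' {m} ∩ X ⁻¹' {x}) *
            cP μ (M ⁻¹' {m}) (E ⁻¹' {e} ∩ X ⁻¹' {x}) *
            (μ (X ⁻¹' {x})).toReal) := by
  intro e
  have hXx : ∀ x, MeasurableSet (X ⁻¹' {x}) := fun x => hX (measurableSet_singleton x)
  have hEe : MeasurableSet (E ⁻¹' {e}) := hE (measurableSet_singleton e)
  set g : Ω → ℝ := fun ω => Yc e (Mc e ω) ω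
  have hg : Integrable g μ := integrable_comp_measurable_index (hYc e) (hMc e)
  have hgY : ∀ᵐ ω ∂μ, E ω = e → g ω = Y ω := by
    filter_upwards [hconsM e, ae_all_iff.2 (hconsY e)] with ω hMω hYω hω
    exact (congrArg (Yc e · ω) (hMω hω)).trans (hYω _ hω rfl)
  have heval : Measurable fun p : (𝒮 → ℝ) × 𝒮 => p.1 p.2 :=
    measurable_from_prod_countable_left fun m => measurable_pi_apply m
  have hfiber : ∀ x, μ (X ⁻¹' {x}) ≠ 0 →
      cE μ g (X ⁻¹' {x}) = cE μ Y (E ⁻¹' {e} ∩ X ⁻¹' {x}) := by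
    intro x hx
    have hind : IndepFun g E μ[|X ⁻¹' {x}] := (hSI1 e e x hx).comp heval measurable_id
    rw [cE_eq_cE_inter_of_indepFun (hXx x) hind hg.aestronglyMeasurable hE
      (measurableSet_singleton e) (hposE e x hx)]
    exact cE_congr_ae (hEe.inter (hXx x)) (hgY.mono fun ω h hω => h hω.1)
  refine ⟨?_, ?_⟩
  · rw [integral_eq_sum_cE_mul_measure hX hg,
      ← Finset.sum_filter_of_ne (p := fun x => μ (X ⁻¹' {x}) ≠ 0) fun x _ h => ?_]
    · exact Finset.sum_congr rfl fun x hx => by rw [hfiber x (Finset.mem_filter.1 hx).2]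
    · contrapose! h
      simp [h]
  · rw [Finset.sum_comm]
    refine Finset.sum_congr rfl fun x _ => ?_
    rw [← Finset.sum_mul, cE_eq_sum_cE_mul_cP hM (hEe.inter (hXx x)) hY]
    simp_rw [Set.inter_right_comm _ (X ⁻¹' {x})]

open Classical in
/-- under consistency, sequential ignorability and positivity, for each
`e ∈ {0,1}`, `E[Y_{e,M_e}] = δ_e = Σ_x E(Y|E=e,X=x)·P(X=x)
= Σ_{m,x} E(Y|E=e,M=m,X=x)·P(M=m|E=e,X=x)·P(X=x)`. -/
theorem g_formula_identification
    {Ω 𝒳 𝒮 : Type*} [MeasurableSpace Ω] [Fintype 𝒳] [Fintype 𝒮]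
    [MeasurableSpace 𝒳] [MeasurableSingletonClass 𝒳]
    [MeasurableSpace 𝒮] [MeasurableSingletonClass 𝒮]
    (μ : Measure Ω) [IsProbabilityMeasure μ]
    (X : Ω → 𝒳) (M : Ω → 𝒮) (E : Ω → Bool) (Y : Ω → ℝ)
    (hX : Measurable X) (hM : Measurable M) (hE : Measurable E)
    (hY : Integrable Y μ)
    -- counterfactuals: `Yc e m = Y_{e,m}` and `Mc e = M_e`
    (Yc : Bool → 𝒮 → Ω → ℝ) (Mc : Bool → Ω → 𝒮)
    (hYc : ∀ e m, Integrable (Yc e m) μ) (hMc : ∀ e, Measurable (Mc e))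
    -- positivity
    (hposE : ∀ (e : Bool) (x : 𝒳), μ (X ⁻¹' {x}) ≠ 0 → μ (E ⁻¹' {e} ∩ X ⁻¹' {x}) ≠ 0)
    (hposM : ∀ (m : 𝒮) (e : Bool) (x : 𝒳), μ (X ⁻¹' {x}) ≠ 0 →
      μ (M ⁻¹' {m} ∩ E ⁻¹' {e} ∩ X ⁻¹' {x}) ≠ 0)
    -- consistency
    (hconsM : ∀ e : Bool, ∀ᵐ ω ∂μ, E ω = e → Mc e ω = M ω)
    (hconsY : ∀ (e : Bool) (m : 𝒮), ∀ᵐ ω ∂μ, E ω = e → M ω = m → Yc e m ω = Y ω)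
    -- sequential ignorability (i): ((Y_{e',m'})_{m'}, M_e) ⫫ E | X
    (hSI1 : ∀ (e e' : Bool) (x : 𝒳), μ (X ⁻¹' {x}) ≠ 0 →
      IndepFun (fun ω => ((fun m => Yc e' m ω), Mc e ω)) E (μ[|X ⁻¹' {x}]))
    -- sequential ignorability (ii): Y_{e',m} ⫫ M | (E, X)
    (hSI2 : ∀ (e' e : Bool) (m : 𝒮) (x : 𝒳), μ (X ⁻¹' {x}) ≠ 0 →
      IndepFun (Yc e' m) M (μ[|E ⁻¹' {e} ∩ X ⁻¹' {x}])) :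
    ∀ e : Bool,
      (∫ ω, Yc e (Mc e ω) ω ∂μ =
        ∑ x ∈ Finset.univ.filter (fun x => μ (X ⁻¹' {x}) ≠ 0),
          cE μ Y (E ⁻¹' {e} ∩ X ⁻¹' {x}) * (μ (X ⁻¹' {x})).toReal) ∧
      (∑ x ∈ Finset.univ.filter (fun x => μ (X ⁻¹' {x}) ≠ 0),
          cE μ Y (E ⁻¹' {e} ∩ X ⁻¹' {x}) * (μ (X ⁻¹' {x})).toReal =
        ∑ m : 𝒮, ∑ x ∈ Finset.univ.filter (fun x => μ (X ⁻¹' {x}) ≠ 0),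
          cE μ Y (E ⁻¹' {e} ∩ M ⁻¹' {m} ∩ X ⁻¹' {x}) *
            cP μ (M ⁻¹' {m}) (E ⁻¹' {e} ∩ X ⁻¹' {x}) *
            (μ (X ⁻¹' {x})).toReal) :=
  g_formula_identification_general μ X M E Y hX hM hE hY Yc Mc hYc hMc hposE hconsM hconsY hSI1
end

section
/- Pathwise differentiability of the g-functional δ_e with the Robins–Hahn influence function: for every differentiable one-parameter family (p_t) of strictly positive joint pmfs on 𝒴×𝒮×{0,1}×𝒳 with p_0 the true pmf of O = (Y,M,E,X), and each e ∈ {0,1}, the map t ↦ δ_e(t) := Σ_x E_t(Y|E=e,X=x)·f_t(x) is differentiable at t = 0 and dδ_e(t)/dt|_{t=0} = E[ S_e · U ], where S_e := [1{E=e}/P(E=e|X)]·(Y − a_e(X)) + a_e(X) − δ_e, a_e(x) := E(Y|E=e,X=x), δ_e := Σ_x a_e(x)·P(X=x), and U := (d/dt) log p_t(O)|_{t=0} is the score. -/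
open scoped BigOperators

/-- The sample space of the observed data `O = (Y, M, E, X)`, where `Y` takes values in a
finite set `𝒴` of reals (encoded by a finite type `𝒴` with a value map), `M` in a finite
set `𝒮`, `E` in `{0,1}` (encoded as `Bool`) and `X` in a finite set `𝒳`. -/
abbrev Obs (𝒴 𝒮 𝒳 : Type*) := 𝒴 × 𝒮 × Bool × 𝒳

noncomputable section

variable {𝒴 𝒮 𝒳 : Type*} [Fintype 𝒴] [Fintype 𝒮] [Fintype 𝒳]

/-- Marginal pmf of `X`: `f(x) = Σ_{y,m,e} p(y,m,e,x)`. -/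
def margX (p : Obs 𝒴 𝒮 𝒳 → ℝ) (x : 𝒳) : ℝ :=
  ∑ y : 𝒴, ∑ m : 𝒮, ∑ e : Bool, p (y, m, e, x)

/-- Joint pmf of `(E, X)`. -/
def jointEX (p : Obs 𝒴 𝒮 𝒳 → ℝ) (e : Bool) (x : 𝒳) : ℝ :=
  ∑ y : 𝒴, ∑ m : 𝒮, p (y, m, e, x)

/-- Joint pmf of `(M, E, X)`. -/
def jointMEX (p : Obs 𝒴 𝒮 𝒳 → ℝ) (m : 𝒮) (e : Bool) (x : 𝒳) : ℝ :=
  ∑ y : 𝒴, p (y, m, e, x)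

/-- Conditional pmf `P(E=e | X=x)` computed under `p`, as a ratio of sums. -/
def fE (p : Obs 𝒴 𝒮 𝒳 → ℝ) (e : Bool) (x : 𝒳) : ℝ :=
  jointEX p e x / margX p x

/-- Conditional pmf `P(M=m | E=e, X=x)` computed under `p`, as a ratio of sums. -/
def fM (p : Obs 𝒴 𝒮 𝒳 → ℝ) (m : 𝒮) (e : Bool) (x : 𝒳) : ℝ :=
  jointMEX p m e x / jointEX p e x

/-- Outcome regression `b(m,x) = E(Y | E=1, M=m, X=x)` computed under `p`, where
`val : 𝒴 → ℝ` gives the real values of the outcome. -/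
def bFun (val : 𝒴 → ℝ) (p : Obs 𝒴 𝒮 𝒳 → ℝ) (m : 𝒮) (x : 𝒳) : ℝ :=
  (∑ y : 𝒴, val y * p (y, m, true, x)) / jointMEX p m true x

/-- `η(x) = Σ_m b(m,x)·P(M=m | E=0, X=x)` computed under `p`. -/
def etaFun (val : 𝒴 → ℝ) (p : Obs 𝒴 𝒮 𝒳 → ℝ) (x : 𝒳) : ℝ :=
  ∑ m : 𝒮, bFun val p m x * fM p m false x

/-- The mediation functional
`θ(p) = Σ_{m,x} E_p(Y|E=1,M=m,X=x)·f_p(m|E=0,X=x)·f_p(x)` computed under the pmf `p`. -/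
def thetaP (val : 𝒴 → ℝ) (p : Obs 𝒴 𝒮 𝒳 → ℝ) : ℝ :=
  ∑ x : 𝒳, etaFun val p x * margX p x

/-- The efficient influence function `S` of the mediation functional:
`S := 1{E=1}·[P(M=M|E=0,X)/(P(E=1|X)·P(M=M|E=1,X))]·(Y − b(M,X))
  + [1{E=0}/P(E=0|X)]·(b(M,X) − η(X)) + η(X) − θ0`. -/
def effIF (val : 𝒴 → ℝ) (p : Obs 𝒴 𝒮 𝒳 → ℝ) : Obs 𝒴 𝒮 𝒳 → ℝ :=
  fun o =>
    (if o.2.2.1 then (1:ℝ) else 0) *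
        (fM p o.2.1 false o.2.2.2 / (fE p true o.2.2.2 * fM p o.2.1 true o.2.2.2)) *
        (val o.1 - bFun val p o.2.1 o.2.2.2) +
      (if o.2.2.1 then (0:ℝ) else 1) / fE p false o.2.2.2 *
        (bFun val p o.2.1 o.2.2.2 - etaFun val p o.2.2.2) +
      etaFun val p o.2.2.2 - thetaP val p

end

noncomputable section

variable {𝒴 𝒮 𝒳 : Type*} [Fintype 𝒴] [Fintype 𝒮] [Fintype 𝒳]

/-- Outcome regression on the exposure and confounders only:
`a_e(x) = E(Y | E=e, X=x)` computed under `p`. -/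
def aFun (val : 𝒴 → ℝ) (p : Obs 𝒴 𝒮 𝒳 → ℝ) (e : Bool) (x : 𝒳) : ℝ :=
  (∑ y : 𝒴, ∑ m : 𝒮, val y * p (y, m, e, x)) / jointEX p e x

/-- The g-functional `δ_e(p) = Σ_x E_p(Y|E=e,X=x)·f_p(x)`. -/
def deltaP (val : 𝒴 → ℝ) (p : Obs 𝒴 𝒮 𝒳 → ℝ) (e : Bool) : ℝ :=
  ∑ x : 𝒳, aFun val p e x * margX p x

/-- The Robins–Hahn influence function
`S_e := [1{E=e}/P(E=e|X)]·(Y − a_e(X)) + a_e(X) − δ_e`. -/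
def deltaIF (val : 𝒴 → ℝ) (p : Obs 𝒴 𝒮 𝒳 → ℝ) (e : Bool) : Obs 𝒴 𝒮 𝒳 → ℝ :=
  fun o =>
    (if o.2.2.1 = e then (1:ℝ) else 0) / fE p e o.2.2.2 * (val o.1 - aFun val p e o.2.2.2) +
      aFun val p e o.2.2.2 - deltaP val p e

end


/-!
Each ingredient of `δ_e(p) = Σ_x N_x(p) / D_x(p) · F_x(p)` (with `N_x(p) = E_p[Y; E=e, X=x]`,
`D_x(p) = P_p(E=e, X=x)`, `F_x(p) = P_p(X=x)`) is linear in `p`, so along a path its derivative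
is the same functional applied to the velocity `ṗ`. The quotient and product rules then give
`δ̇_e = Σ_x [(Ṅ_x − a_e(x) Ḋ_x) / P(E=e|X=x) + a_e(x) Ḟ_x]`, which regrouped by observation is
`Σ_o (S_e(o) + δ_e) ṗ(o)`. Since `Σ_o ṗ(o) = 0` and `ṗ = p · U`, this is `E[S_e U]`.
-/

open Filter Topology

theorem sum_eq_zero_of_hasDerivAt_of_eventually_sum_eq {ι : Type*} [Fintype ι]
    {f : ℝ → ι → ℝ} {f' : ι → ℝ} {t₀ c : ℝ}
    (hf : ∀ i, HasDerivAt (fun t => f t i) (f' i) t₀)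
    (hc : ∀ᶠ t in 𝓝 t₀, ∑ i, f t i = c) :
    ∑ i, f' i = 0 :=
  (HasDerivAt.fun_sum fun i _ => hf i).unique
    ((hasDerivAt_const t₀ c).congr_of_eventuallyEq hc)

theorem HasDerivAt.mul_deriv_log {f : ℝ → ℝ} {f' x : ℝ} (hf : HasDerivAt f f' x)
    (hx : f x ≠ 0) : f x * _root_.deriv (fun t => Real.log (f t)) x = f' := by
  rw [(hf.log hx).deriv]
  field_simp

noncomputable section

variable {𝒴 𝒮 𝒳 : Type*} [Fintype 𝒴] [Fintype 𝒮]

def partialMeanEX (val : 𝒴 → ℝ) (p : Obs 𝒴 𝒮 𝒳 → ℝ) (e : Bool) (x : 𝒳) : ℝ :=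
  ∑ y : 𝒴, ∑ m : 𝒮, val y * p (y, m, e, x)

theorem aFun_eq_div (val : 𝒴 → ℝ) (p : Obs 𝒴 𝒮 𝒳 → ℝ) (e : Bool) (x : 𝒳) :
    aFun val p e x = partialMeanEX val p e x / jointEX p e x :=
  rfl

theorem jointEX_pos [Nonempty 𝒴] [Nonempty 𝒮] {p : Obs 𝒴 𝒮 𝒳 → ℝ} (hp : ∀ o, 0 < p o)
    (e : Bool) (x : 𝒳) : 0 < jointEX p e x :=
  Finset.sum_pos (fun _ _ => Finset.sum_pos (fun _ _ => hp _) Finset.univ_nonempty)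
    Finset.univ_nonempty

theorem sum_obs_eq [Fintype 𝒳] (f : Obs 𝒴 𝒮 𝒳 → ℝ) :
    ∑ o, f o = ∑ x : 𝒳, ∑ y : 𝒴, ∑ m : 𝒮, ∑ e : Bool, f (y, m, e, x) := by
  simp only [Fintype.sum_prod_type]
  simp_rw [Finset.sum_comm (γ := Bool) (α := 𝒳), Finset.sum_comm (γ := 𝒮) (α := 𝒳)]
  exact Finset.sum_comm

theorem sum_deltaIF_mul [Fintype 𝒳] (val : 𝒴 → ℝ) (p d : Obs 𝒴 𝒮 𝒳 → ℝ) (e : Bool) :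
    ∑ o, deltaIF val p e o * d o =
      ∑ x : 𝒳, ((partialMeanEX val d e x - aFun val p e x * jointEX d e x) / fE p e x
          + aFun val p e x * margX d x)
        - deltaP val p e * ∑ o, d o := by
  simp only [deltaIF, sub_mul, Finset.sum_sub_distrib, ← Finset.mul_sum]
  congr 1
  rw [sum_obs_eq]
  refine Finset.sum_congr rfl fun x _ => ?_
  simp only [partialMeanEX, jointEX, margX, add_mul, Finset.sum_add_distrib, ite_div, ite_mul,
    zero_div, zero_mul, Fintype.sum_ite_eq', Finset.mul_sum, Finset.sum_div,
    ← Finset.sum_sub_distrib]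
  congr 1
  refine Finset.sum_congr rfl fun y _ => Finset.sum_congr rfl fun m _ => ?_
  ring

section Path

variable {pt : ℝ → Obs 𝒴 𝒮 𝒳 → ℝ} {d : Obs 𝒴 𝒮 𝒳 → ℝ} {t₀ : ℝ}

theorem hasDerivAt_margX (hd : ∀ o, HasDerivAt (fun t => pt t o) (d o) t₀) (x : 𝒳) :
    HasDerivAt (fun t => margX (pt t) x) (margX d x) t₀ :=
  .fun_sum fun _ _ => .fun_sum fun _ _ => .fun_sum fun _ _ => hd _

theorem hasDerivAt_jointEX (hd : ∀ o, HasDerivAt (fun t => pt t o) (d o) t₀) (e : Bool)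
    (x : 𝒳) : HasDerivAt (fun t => jointEX (pt t) e x) (jointEX d e x) t₀ :=
  .fun_sum fun _ _ => .fun_sum fun _ _ => hd _

theorem hasDerivAt_partialMeanEX (val : 𝒴 → ℝ)
    (hd : ∀ o, HasDerivAt (fun t => pt t o) (d o) t₀) (e : Bool) (x : 𝒳) :
    HasDerivAt (fun t => partialMeanEX val (pt t) e x) (partialMeanEX val d e x) t₀ :=
  .fun_sum fun y _ => .fun_sum fun _ _ => (hd _).const_mul (val y)

theorem hasDerivAt_aFun (val : 𝒴 → ℝ) (hd : ∀ o, HasDerivAt (fun t => pt t o) (d o) t₀)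
    (e : Bool) (x : 𝒳) (hD : jointEX (pt t₀) e x ≠ 0) :
    HasDerivAt (fun t => aFun val (pt t) e x)
      ((partialMeanEX val d e x - aFun val (pt t₀) e x * jointEX d e x) / jointEX (pt t₀) e x)
      t₀ := by
  have hquot := (hasDerivAt_partialMeanEX val hd e x).fun_div (hasDerivAt_jointEX hd e x) hD
  refine hquot.congr_deriv ?_
  rw [aFun_eq_div]
  field_simp

theorem hasDerivAt_deltaP [Fintype 𝒳] (val : 𝒴 → ℝ)
    (hd : ∀ o, HasDerivAt (fun t => pt t o) (d o) t₀) (e : Bool)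
    (hD : ∀ x, jointEX (pt t₀) e x ≠ 0) :
    HasDerivAt (fun t => deltaP val (pt t) e)
      (∑ x : 𝒳, ((partialMeanEX val d e x - aFun val (pt t₀) e x * jointEX d e x)
          / fE (pt t₀) e x + aFun val (pt t₀) e x * margX d x)) t₀ := by
  refine .fun_sum fun x _ => ?_
  refine ((hasDerivAt_aFun val hd e x (hD x)).fun_mul (hasDerivAt_margX hd x)).congr_deriv ?_
  rw [fE, div_div_eq_mul_div, div_mul_eq_mul_div]

end Path

end

theorem g_functional_pathwise_differentiability_general
    {𝒴 𝒮 𝒳 : Type*} [Fintype 𝒴] [Fintype 𝒮] [Fintype 𝒳] (val : 𝒴 → ℝ)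
    (p : Obs 𝒴 𝒮 𝒳 → ℝ)
    (hpos : ∀ o, 0 < p o) (hsum : ∑ o : Obs 𝒴 𝒮 𝒳, p o = 1)
    (ε : ℝ) (hε : 0 < ε) (pt : ℝ → Obs 𝒴 𝒮 𝒳 → ℝ)
    (hpt0 : pt 0 = p)
    (hptsum : ∀ t, |t| < ε → ∑ o : Obs 𝒴 𝒮 𝒳, pt t o = 1)
    (hdiff : ∀ o, DifferentiableAt ℝ (fun t => pt t o) 0) :
    ∀ e : Bool,
      HasDerivAt (fun t => deltaP val (pt t) e)
        (∑ o : Obs 𝒴 𝒮 𝒳, p o * (deltaIF val p e o * deriv (fun t => Real.log (pt t o)) 0))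
        0 := by
  intro e
  subst hpt0
  obtain ⟨⟨y, m, -, -⟩⟩ : Nonempty (Obs 𝒴 𝒮 𝒳) :=
    Finset.univ_nonempty_iff.mp (Finset.nonempty_of_sum_ne_zero (hsum ▸ one_ne_zero))
  have : Nonempty 𝒴 := ⟨y⟩
  have : Nonempty 𝒮 := ⟨m⟩
  have hd o := (hdiff o).hasDerivAt
  have hd_sum : ∑ o, deriv (fun t => pt t o) 0 = 0 := by
    refine sum_eq_zero_of_hasDerivAt_of_eventually_sum_eq hd (c := 1) ?_
    filter_upwards [Metric.ball_mem_nhds (0 : ℝ) hε] with t ht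
    exact hptsum t (by simpa using ht)
  have hscore o : pt 0 o * (deltaIF val (pt 0) e o * deriv (fun t => Real.log (pt t o)) 0)
      = deltaIF val (pt 0) e o * deriv (fun t => pt t o) 0 := by
    rw [mul_left_comm, (hd o).mul_deriv_log (hpos o).ne']
  simp_rw [hscore, sum_deltaIF_mul, hd_sum, mul_zero, sub_zero]
  exact hasDerivAt_deltaP val hd e fun x => (jointEX_pos hpos e x).ne'

/-- pathwise differentiability of the g-functional `δ_e` with the
Robins–Hahn influence function: for every differentiable one-parameter family `(p_t)` of
strictly positive pmfs with `p_0 = p` and each `e ∈ {0,1}`, `t ↦ δ_e(p_t)` is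
differentiable at `0` with derivative `E[S_e·U]`, `U` the score. -/
theorem g_functional_pathwise_differentiability
    {𝒴 𝒮 𝒳 : Type*} [Fintype 𝒴] [Fintype 𝒮] [Fintype 𝒳] (val : 𝒴 → ℝ)
    (p : Obs 𝒴 𝒮 𝒳 → ℝ)
    (hpos : ∀ o, 0 < p o) (hsum : ∑ o : Obs 𝒴 𝒮 𝒳, p o = 1)
    (ε : ℝ) (hε : 0 < ε) (pt : ℝ → Obs 𝒴 𝒮 𝒳 → ℝ)
    (hpt0 : pt 0 = p)
    (hptpos : ∀ t, |t| < ε → ∀ o, 0 < pt t o)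
    (hptsum : ∀ t, |t| < ε → ∑ o : Obs 𝒴 𝒮 𝒳, pt t o = 1)
    (hdiff : ∀ o, DifferentiableAt ℝ (fun t => pt t o) 0) :
    ∀ e : Bool,
      HasDerivAt (fun t => deltaP val (pt t) e)
        (∑ o : Obs 𝒴 𝒮 𝒳, p o * (deltaIF val p e o * deriv (fun t => Real.log (pt t o)) 0))
        0 :=
  g_functional_pathwise_differentiability_general val p hpos hsum ε hε pt hpt0 hptsum hdiff
end

section
/- Robustness of the mediation estimating functional under submodel M_b (correct outcome regression and correct exposure model, arbitrary mediator density): if b̂(m,x) = E(Y|E=1,M=m,X=x) and f̂_E(x) = P(E=1|X=x) for all m ∈ 𝒮 and x with P(X=x) > 0, then for every f̂_M : 𝒮×{0,1}×𝒳 → (0,1) with Σ_m f̂_M(m|e,x) = 1 for each (e,x), T(b̂, f̂_M, f̂_E) = θ0. -/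
open MeasureTheory ProbabilityTheory

open Classical in
/-- The mediation functional
`θ0 = Σ_{m, x : P(X=x)>0} E(Y | E=1, M=m, X=x) · P(M=m | E=0, X=x) · P(X=x)`. -/
noncomputable def theta0 {Ω 𝒳 𝒮 : Type*} [MeasurableSpace Ω] [Fintype 𝒳] [Fintype 𝒮]
    (μ : Measure Ω) (X : Ω → 𝒳) (M : Ω → 𝒮) (E : Ω → Bool) (Y : Ω → ℝ) : ℝ :=
  ∑ m : 𝒮, ∑ x ∈ Finset.univ.filter (fun x => μ (X ⁻¹' {x}) ≠ 0),
    cE μ Y (E ⁻¹' {true} ∩ M ⁻¹' {m} ∩ X ⁻¹' {x}) *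
      cP μ (M ⁻¹' {m}) (E ⁻¹' {false} ∩ X ⁻¹' {x}) *
      (μ (X ⁻¹' {x})).toReal

/-!
Under `M_b` the weighted residual `Y - b̂(M, X)` integrates to zero over every cell
`{E = 1, M = m, X = x}`, because `b̂(m, x)` is the mean of `Y` on that cell; so the mediator
model `f̂_M` drops out. With the correct exposure model, `1 - f̂_E(x) = P(E = 0 | X = x)`, so on the
stratum `{X = x}` the second term integrates to `P(X = x)` times the conditional mean of
`b̂(M, x) - η̂(x)` given `E = 0, X = x`. Its `η̂(x)` part cancels the augmentation term, and what is
left is `Σ_m b̂(m, x) P(M = m | E = 0, X = x) P(X = x)`, the stratum's share of `θ0`.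
-/

section Fibers

variable {Ω ι : Type*} [MeasurableSpace Ω] [Fintype ι] [MeasurableSpace ι]
  [MeasurableSingletonClass ι] {μ : Measure Ω} {g : Ω → ι}

lemma sum_measure_preimage_singleton_inter_toReal [IsFiniteMeasure μ] (hg : Measurable g)
    (A : Set Ω) :
    ∑ i, (μ (g ⁻¹' {i} ∩ A)).toReal = (μ A).toReal := by
  have h := sum_measureReal_preimage_singleton (μ := μ.restrict A) Finset.univ
    (fun i _ => hg (measurableSet_singleton i))
  simpa [measureReal_restrict_apply (hg (measurableSet_singleton _)), measureReal_def] using h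

lemma integral_eq_sum_setIntegral_preimage_singleton (hg : Measurable g) {f : Ω → ℝ}
    (hf : ∀ i, IntegrableOn f (g ⁻¹' {i}) μ) :
    ∫ ω, f ω ∂μ = ∑ i, ∫ ω in g ⁻¹' {i}, f ω ∂μ := by
  rw [← integral_iUnion_fintype (fun i => hg (measurableSet_singleton i))
    (fun i j hij => Disjoint.preimage g (Set.disjoint_singleton.2 hij)) hf,
    Set.iUnion_eq_univ_iff.2 fun ω => ⟨g ω, rfl⟩, setIntegral_univ]

lemma integral_affine_comp_eq_sum [IsFiniteMeasure μ] (hg : Measurable g) {Y : Ω → ℝ}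
    (hY : Integrable Y μ) (c d : ι → ℝ) :
    ∫ ω, (c (g ω) * Y ω + d (g ω)) ∂μ
      = ∑ i, (c i * ∫ ω in g ⁻¹' {i}, Y ω ∂μ + d i * (μ (g ⁻¹' {i})).toReal) := by
  have hfiber : ∀ i, Set.EqOn (fun ω => c (g ω) * Y ω + d (g ω)) (fun ω => c i * Y ω + d i)
      (g ⁻¹' {i}) := fun i ω hω => by simp only [Set.mem_singleton_iff.1 hω]
  have hint : ∀ i, IntegrableOn (fun ω => c i * Y ω + d i) (g ⁻¹' {i}) μ := fun i =>
    (hY.integrableOn.const_mul (c i)).add (integrableOn_const (measure_ne_top _ _))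
  rw [integral_eq_sum_setIntegral_preimage_singleton hg fun i =>
    (hint i).congr_fun (hfiber i).symm (hg (measurableSet_singleton i))]
  refine Finset.sum_congr rfl fun i _ => ?_
  rw [setIntegral_congr_fun (hg (measurableSet_singleton i)) (hfiber i),
    integral_add (hY.integrableOn.const_mul _) (integrableOn_const (measure_ne_top _ _)),
    integral_const_mul, setIntegral_const, smul_eq_mul, measureReal_def]
  ring

end Fibers

lemma setIntegral_eq_cE_mul {Ω : Type*} [MeasurableSpace Ω] (μ : Measure Ω) [IsFiniteMeasure μ]
    (Y : Ω → ℝ) (A : Set Ω) : ∫ ω in A, Y ω ∂μ = cE μ Y A * (μ A).toReal := by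
  rcases eq_or_ne (μ A) 0 with h | h
  · simp [setIntegral_measure_zero _ h, h]
  · rw [cE, div_mul_cancel₀ _ (ENNReal.toReal_ne_zero.2 ⟨h, measure_ne_top _ _⟩)]

lemma sum_add_div_one_sub_eq {S : Type*} [Fintype S] {b pt pf : S → ℝ} {η q Pt Pf PX : ℝ}
    (hpt : ∑ m, pt m = Pt) (hpf : ∑ m, pf m = Pf) (hPX : Pt + Pf = PX) (hq : q = Pt / PX)
    (hPf : Pf ≠ 0) (hPX0 : PX ≠ 0) :
    ∑ m, (η * pt m + ((b m - η) / (1 - q) + η) * pf m) = ∑ m, b m * (pf m / Pf) * PX := by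
  have h1q : 1 - q = Pf / PX := by rw [hq]; field_simp; linarith
  calc ∑ m, (η * pt m + ((b m - η) / (1 - q) + η) * pf m)
      = ∑ m, (η * pt m + η * pf m + (b m * pf m - η * pf m) * (PX / Pf)) :=
        Finset.sum_congr rfl fun m _ => by rw [h1q]; field_simp; ring
    _ = η * PX + (∑ m, b m * pf m - η * Pf) * (PX / Pf) := by
        rw [Finset.sum_add_distrib, Finset.sum_add_distrib, ← Finset.sum_mul,
          Finset.sum_sub_distrib, ← Finset.mul_sum, ← Finset.mul_sum, hpt, hpf,
          ← hPX]
        ring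
    _ = (∑ m, b m * pf m) * (PX / Pf) := by field_simp; ring
    _ = ∑ m, b m * (pf m / Pf) * PX := by
        rw [Finset.sum_mul]; exact Finset.sum_congr rfl fun m _ => by ring

section Strata

variable {Ω 𝒳 𝒮 : Type*} [MeasurableSpace Ω] [Fintype 𝒮]
  {μ : Measure Ω} {X : Ω → 𝒳} {M : Ω → 𝒮} {E : Ω → Bool} {Y : Ω → ℝ}

lemma integral_eq_sum_cells [Fintype 𝒳] [IsFiniteMeasure μ] [MeasurableSpace 𝒳]
    [MeasurableSingletonClass 𝒳] [MeasurableSpace 𝒮] [MeasurableSingletonClass 𝒮]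
    (hX : Measurable X) (hM : Measurable M) (hE : Measurable E) (hY : Integrable Y μ)
    (w d : 𝒳 → 𝒮 → Bool → ℝ) :
    ∫ ω, (w (X ω) (M ω) (E ω) * Y ω + d (X ω) (M ω) (E ω)) ∂μ
      = ∑ x, ∑ m, ∑ e, (w x m e * ∫ ω in M ⁻¹' {m} ∩ (E ⁻¹' {e} ∩ X ⁻¹' {x}), Y ω ∂μ +
          d x m e * (μ (M ⁻¹' {m} ∩ (E ⁻¹' {e} ∩ X ⁻¹' {x}))).toReal) := by
  have hcell : ∀ x m e, (fun ω => (X ω, M ω, E ω)) ⁻¹' {(x, m, e)}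
      = M ⁻¹' {m} ∩ (E ⁻¹' {e} ∩ X ⁻¹' {x}) := fun x m e => by
    ext ω
    simp only [Set.mem_preimage, Set.mem_singleton_iff, Prod.mk.injEq, Set.mem_inter_iff]
    tauto
  have h := integral_affine_comp_eq_sum (hX.prodMk (hM.prodMk hE)) hY
    (fun z => w z.1 z.2.1 z.2.2) (fun z => d z.1 z.2.1 z.2.2)
  simpa only [Fintype.sum_prod_type, hcell] using h

lemma sum_cells_eq_zero {x : 𝒳} (hx : μ (X ⁻¹' {x}) = 0) (w d : 𝒮 → Bool → ℝ) :
    ∑ m, ∑ e, (w m e * ∫ ω in M ⁻¹' {m} ∩ (E ⁻¹' {e} ∩ X ⁻¹' {x}), Y ω ∂μ +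
      d m e * (μ (M ⁻¹' {m} ∩ (E ⁻¹' {e} ∩ X ⁻¹' {x}))).toReal) = 0 := by
  have hnull : ∀ m e, μ (M ⁻¹' {m} ∩ (E ⁻¹' {e} ∩ X ⁻¹' {x})) = 0 := fun _ _ =>
    measure_mono_null (fun _ h => h.2.2) hx
  simp [setIntegral_measure_zero _ (hnull _ _), hnull]

lemma sum_cells_eq_sum_mediation [IsFiniteMeasure μ] [MeasurableSpace 𝒮]
    [MeasurableSingletonClass 𝒮] (hM : Measurable M) (hE : Measurable E) {x : 𝒳}
    (hx : μ (X ⁻¹' {x}) ≠ 0) (hposE : μ (E ⁻¹' {false} ∩ X ⁻¹' {x}) ≠ 0) {b : 𝒮 → ℝ}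
    (hb : ∀ m, b m = cE μ Y (E ⁻¹' {true} ∩ M ⁻¹' {m} ∩ X ⁻¹' {x}))
    {q : ℝ} (hq : q = cP μ (E ⁻¹' {true}) (X ⁻¹' {x})) (w : 𝒮 → ℝ) (η : ℝ) :
    ∑ m, ((w m * ∫ ω in M ⁻¹' {m} ∩ (E ⁻¹' {true} ∩ X ⁻¹' {x}), Y ω ∂μ +
        (η - w m * b m) * (μ (M ⁻¹' {m} ∩ (E ⁻¹' {true} ∩ X ⁻¹' {x}))).toReal) +
      ((b m - η) / (1 - q) + η) * (μ (M ⁻¹' {m} ∩ (E ⁻¹' {false} ∩ X ⁻¹' {x}))).toReal)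
      = ∑ m, cE μ Y (E ⁻¹' {true} ∩ M ⁻¹' {m} ∩ X ⁻¹' {x}) *
          cP μ (M ⁻¹' {m}) (E ⁻¹' {false} ∩ X ⁻¹' {x}) * (μ (X ⁻¹' {x})).toReal := by
  have hresidual : ∀ m, ∫ ω in M ⁻¹' {m} ∩ (E ⁻¹' {true} ∩ X ⁻¹' {x}), Y ω ∂μ
      = b m * (μ (M ⁻¹' {m} ∩ (E ⁻¹' {true} ∩ X ⁻¹' {x}))).toReal := fun m => by
    rw [setIntegral_eq_cE_mul, hb, Set.inter_assoc (E ⁻¹' {true}),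
      Set.inter_left_comm (E ⁻¹' {true})]
  have hPX : (μ (E ⁻¹' {true} ∩ X ⁻¹' {x})).toReal + (μ (E ⁻¹' {false} ∩ X ⁻¹' {x})).toReal
      = (μ (X ⁻¹' {x})).toReal := by
    rw [← Fintype.sum_bool fun e => (μ (E ⁻¹' {e} ∩ X ⁻¹' {x})).toReal]
    exact sum_measure_preimage_singleton_inter_toReal hE _
  calc _ = ∑ m, (η * (μ (M ⁻¹' {m} ∩ (E ⁻¹' {true} ∩ X ⁻¹' {x}))).toReal +
          ((b m - η) / (1 - q) + η) * (μ (M ⁻¹' {m} ∩ (E ⁻¹' {false} ∩ X ⁻¹' {x}))).toReal) :=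
        Finset.sum_congr rfl fun m _ => by rw [hresidual]; ring
    _ = ∑ m, b m * ((μ (M ⁻¹' {m} ∩ (E ⁻¹' {false} ∩ X ⁻¹' {x}))).toReal /
          (μ (E ⁻¹' {false} ∩ X ⁻¹' {x})).toReal) * (μ (X ⁻¹' {x})).toReal :=
        sum_add_div_one_sub_eq (sum_measure_preimage_singleton_inter_toReal hM _)
          (sum_measure_preimage_singleton_inter_toReal hM _) hPX hq
          (ENNReal.toReal_ne_zero.2 ⟨hposE, measure_ne_top _ _⟩)
          (ENNReal.toReal_ne_zero.2 ⟨hx, measure_ne_top _ _⟩)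
    _ = _ := Finset.sum_congr rfl fun m _ => by rw [hb, cP]

end Strata

theorem robust_Mb_general
    {Ω 𝒳 𝒮 : Type*} [MeasurableSpace Ω] [Fintype 𝒳] [Fintype 𝒮]
    [MeasurableSpace 𝒳] [MeasurableSingletonClass 𝒳]
    [MeasurableSpace 𝒮] [MeasurableSingletonClass 𝒮]
    (μ : Measure Ω) [IsProbabilityMeasure μ]
    (X : Ω → 𝒳) (M : Ω → 𝒮) (E : Ω → Bool) (Y : Ω → ℝ)
    (hX : Measurable X) (hM : Measurable M) (hE : Measurable E)
    (hY : Integrable Y μ)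
    (hposE : ∀ (e : Bool) (x : 𝒳), μ (X ⁻¹' {x}) ≠ 0 → μ (E ⁻¹' {e} ∩ X ⁻¹' {x}) ≠ 0)
    -- working models
    (bhat : 𝒮 → 𝒳 → ℝ) (fMhat : 𝒮 → Bool → 𝒳 → ℝ) (fEhat : 𝒳 → ℝ)
    (etahat : 𝒳 → ℝ)
    -- submodel M_b: correct outcome regression and correct exposure model
    (hb : ∀ (m : 𝒮) (x : 𝒳), μ (X ⁻¹' {x}) ≠ 0 →
      bhat m x = cE μ Y (E ⁻¹' {true} ∩ M ⁻¹' {m} ∩ X ⁻¹' {x}))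
    (hfE : ∀ x : 𝒳, μ (X ⁻¹' {x}) ≠ 0 → fEhat x = cP μ (E ⁻¹' {true}) (X ⁻¹' {x})) :
    ∫ ω,
        ((if E ω then (1:ℝ) else 0) * fMhat (M ω) false (X ω) * (Y ω - bhat (M ω) (X ω)) /
            (fEhat (X ω) * fMhat (M ω) true (X ω)) +
          (if E ω then (0:ℝ) else 1) / (1 - fEhat (X ω)) *
            (bhat (M ω) (X ω) - etahat (X ω)) +
          etahat (X ω)) ∂μ = theta0 μ X M E Y := by
  let w : 𝒳 → 𝒮 → Bool → ℝ := fun x m e =>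
    if e then fMhat m false x / (fEhat x * fMhat m true x) else 0
  let d : 𝒳 → 𝒮 → Bool → ℝ := fun x m e =>
    if e then etahat x - w x m e * bhat m x else (bhat m x - etahat x) / (1 - fEhat x) + etahat x
  calc _ = ∫ ω, (w (X ω) (M ω) (E ω) * Y ω + d (X ω) (M ω) (E ω)) ∂μ :=
        integral_congr_ae <| ae_of_all _ fun ω => by
          cases hEω : E ω <;> simp only [w, d, hEω, Bool.false_eq_true, ↓reduceIte] <;> ring
    _ = theta0 μ X M E Y := by
      rw [integral_eq_sum_cells hX hM hE hY, theta0]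
      conv_rhs => rw [Finset.sum_comm, Finset.sum_filter]
      refine Finset.sum_congr rfl fun x _ => ?_
      split_ifs with hx
      · simpa [w, d, Fintype.sum_bool] using
          sum_cells_eq_sum_mediation hM hE hx (hposE false x hx) (hb · x hx) (hfE x hx) _ (etahat x)
      · exact sum_cells_eq_zero (not_not.1 hx) _ _

/-- robustness of the mediation estimating functional under submodel
M_b: if the outcome regression and the exposure model are correct, then for every
mediator working density, `T(b̂, f̂_M, f̂_E) = θ0`. -/
theorem robust_Mb
    {Ω 𝒳 𝒮 : Type*} [MeasurableSpace Ω] [Fintype 𝒳] [Fintype 𝒮]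
    [MeasurableSpace 𝒳] [MeasurableSingletonClass 𝒳]
    [MeasurableSpace 𝒮] [MeasurableSingletonClass 𝒮]
    (μ : Measure Ω) [IsProbabilityMeasure μ]
    (X : Ω → 𝒳) (M : Ω → 𝒮) (E : Ω → Bool) (Y : Ω → ℝ)
    (hX : Measurable X) (hM : Measurable M) (hE : Measurable E)
    (hY : Integrable Y μ)
    (hposE : ∀ (e : Bool) (x : 𝒳), μ (X ⁻¹' {x}) ≠ 0 → μ (E ⁻¹' {e} ∩ X ⁻¹' {x}) ≠ 0)
    (hposM : ∀ (m : 𝒮) (e : Bool) (x : 𝒳), μ (X ⁻¹' {x}) ≠ 0 →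
      μ (M ⁻¹' {m} ∩ E ⁻¹' {e} ∩ X ⁻¹' {x}) ≠ 0)
    -- working models
    (bhat : 𝒮 → 𝒳 → ℝ) (fMhat : 𝒮 → Bool → 𝒳 → ℝ) (fEhat : 𝒳 → ℝ)
    (hfM01 : ∀ m e x, fMhat m e x ∈ Set.Ioo (0:ℝ) 1)
    (hfMsum : ∀ (e : Bool) (x : 𝒳), ∑ m : 𝒮, fMhat m e x = 1)
    (hfE01 : ∀ x, fEhat x ∈ Set.Ioo (0:ℝ) 1)
    (etahat : 𝒳 → ℝ)
    (hetahat : ∀ x, etahat x = ∑ m : 𝒮, bhat m x * fMhat m false x)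
    -- submodel M_b: correct outcome regression and correct exposure model
    (hb : ∀ (m : 𝒮) (x : 𝒳), μ (X ⁻¹' {x}) ≠ 0 →
      bhat m x = cE μ Y (E ⁻¹' {true} ∩ M ⁻¹' {m} ∩ X ⁻¹' {x}))
    (hfE : ∀ x : 𝒳, μ (X ⁻¹' {x}) ≠ 0 → fEhat x = cP μ (E ⁻¹' {true}) (X ⁻¹' {x})) :
    ∫ ω,
        ((if E ω then (1:ℝ) else 0) * fMhat (M ω) false (X ω) * (Y ω - bhat (M ω) (X ω)) /
            (fEhat (X ω) * fMhat (M ω) true (X ω)) +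
          (if E ω then (0:ℝ) else 1) / (1 - fEhat (X ω)) *
            (bhat (M ω) (X ω) - etahat (X ω)) +
          etahat (X ω)) ∂μ = theta0 μ X M E Y :=
  robust_Mb_general μ X M E Y hX hM hE hY hposE bhat fMhat fEhat etahat hb hfE
end
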